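/- For ζ = (ζ₁,ζ₂,ζ₃,ζ₄) ∈ ℂ⁴ define v₁(ζ) = (1+ζ₁+ζ₂, ζ₃+iζ₄, 1−ζ₁−ζ₂, −ζ₃−iζ₄) and v₂(ζ) = (ζ₃−iζ₄, 1+ζ₁−ζ₂, −ζ₃+iζ₄, 1−ζ₁+ζ₂). If the real parts xⱼ = Re ζⱼ satisfy x₁ > 0 and x₁² > x₂² + x₃² + x₄², then v₁(ζ) and v₂(ζ) are linearly independent over ℂ. -/
import Mathlib


/-- The first spanning vector of the 2-plane Π(ζ). -/
noncomputable def v₁ (ζ : Fin 4 → ℂ) : Fin 4 → ℂ :=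
  ![1 + ζ 0 + ζ 1, ζ 2 + Complex.I * ζ 3, 1 - ζ 0 - ζ 1, -(ζ 2) - Complex.I * ζ 3]

/-- The second spanning vector of the 2-plane Π(ζ). -/
noncomputable def v₂ (ζ : Fin 4 → ℂ) : Fin 4 → ℂ :=
  ![ζ 2 - Complex.I * ζ 3, 1 + ζ 0 - ζ 1, -(ζ 2) + Complex.I * ζ 3, 1 - ζ 0 + ζ 1]

/-- If ζ lies in the tube domain (x₁ > 0 and x₁² > x₂² + x₃² + x₄² for xⱼ = Re ζⱼ),
then v₁(ζ) and v₂(ζ) are linearly independent over ℂ. -/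
theorem stmt_11 (ζ : Fin 4 → ℂ)
    (hx1 : 0 < (ζ 0).re)
    (hx : (ζ 1).re ^ 2 + (ζ 2).re ^ 2 + (ζ 3).re ^ 2 < (ζ 0).re ^ 2) :
    LinearIndependent ℂ ![v₁ ζ, v₂ ζ] := by
  rw [LinearIndependent.pair_iff]
  intro s t h
  have h0 := congrFun h 0
  have h1 := congrFun h 1
  have h2 := congrFun h 2
  have h3 := congrFun h 3
  simp [v₁, v₂] at h0 h1 h2 h3
  constructor
  · have : (2 : ℂ) * s = 0 := by linear_combination h0 + h2
    simpa using this
  · have : (2 : ℂ) * t = 0 := by linear_combination h1 + h3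
    simpa using this
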